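/- Let ψ* denote the Legendre transform of ψ, i.e. ψ*(z) = sup_{w∈ℝ^m}(z·w − ψ(w)). Let φ ∈ C_c^∞(U×(0,T)) and let v ∈ C^∞(U×(0,T); ℝ^m) be a classical solution of Dψ(v_t) = div DF(Dv) in U×(0,T). Then for each t ∈ (0,T), d/dt ∫_U φ ψ*(Dψ(v_t)) dx + ∫_U φ D²F(Dv)(Dv_t, Dv_t) dx = ∫_U ( ψ*(Dψ(v_t)) φ_t − D²F(Dv)(Dv_t, v_t ⊗ Dφ) ) dx, where (v_t ⊗ Dφ)^i_j = v_t^i φ_{x_j}. -/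

import Mathlib

open MeasureTheory Filter Topology Metric Set
open scoped RealInnerProductSpace ENNReal NNReal ContDiff

noncomputable section

/-- The spatial domain `ℝⁿ`. -/
abbrev Sp (n : ℕ) := EuclideanSpace ℝ (Fin n)
/-- The target space `ℝ^m`. -/
abbrev Tg (m : ℕ) := EuclideanSpace ℝ (Fin m)
/-- The space `𝕄^{m×n}` of `m×n` matrices with the Frobenius inner product. -/
abbrev Mat (m n : ℕ) := EuclideanSpace ℝ (Fin m × Fin n)
/-- Symmetric-bilinear-valued data `S²(ℝⁿ;ℝ^m)` (indices `(i,j,k)`). -/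
abbrev Mat3 (m n : ℕ) := EuclideanSpace ℝ (Fin m × Fin n × Fin n)
/-- Trilinear-valued data `S³(ℝⁿ;ℝ^m)` (indices `(i,j,k,l)`). -/
abbrev Mat4 (m n : ℕ) := EuclideanSpace ℝ (Fin m × Fin n × Fin n × Fin n)

/-- Build a vector in `ℝ^m` from coordinates. -/
def vecOf {m : ℕ} (f : Fin m → ℝ) : Tg m := (WithLp.equiv 2 _).symm f
/-- Build a matrix in `𝕄^{m×n}` from entries. -/
def matOf {m n : ℕ} (f : Fin m × Fin n → ℝ) : Mat m n := (WithLp.equiv 2 _).symm f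

/-- Matrix-vector product `M z ∈ ℝ^m`. -/
def matVec {m n : ℕ} (M : Mat m n) (z : Sp n) : Tg m := vecOf fun i => ∑ j, M (i, j) * z j

/-- Tensor product `(v ⊗ z)^i_j = v^i z_j`. -/
def tens {m n : ℕ} (v : Tg m) (z : Sp n) : Mat m n := matOf fun q => v q.1 * z q.2

/-- The matrix `(∂ w^i/∂ x_j)` of the derivative of `w : ℝⁿ → ℝ^m` at `x`. -/
def gradMat {m n : ℕ} (w : Sp n → Tg m) (x : Sp n) : Mat m n :=
  matOf fun q => fderiv ℝ w x (EuclideanSpace.single q.2 1) q.1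

/-- Spatial gradient of a space-time scalar function. -/
def spGrad {n : ℕ} (φ : Sp n × ℝ → ℝ) (x : Sp n) (t : ℝ) : Sp n :=
  (WithLp.equiv 2 _).symm fun j => fderiv ℝ φ (x, t) (EuclideanSpace.single j 1, 0)

/-- Time derivative of a space-time scalar function. -/
def tDeriv {n : ℕ} (φ : Sp n × ℝ → ℝ) (x : Sp n) (t : ℝ) : ℝ := fderiv ℝ φ (x, t) (0, 1)

/-- The Hessian `D²F(M)` of `F` at `M` as a bilinear form. -/
def hessBil {m n : ℕ} (F : Mat m n → ℝ) (M ξ ζ : Mat m n) : ℝ :=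
  ⟪fderiv ℝ (fun N => gradient F N) M ξ, ζ⟫

/-- The entries `F_{M^i_j M^k_l}(M)` of the Hessian of `F` at `M`. -/
def hessEnt {m n : ℕ} (F : Mat m n → ℝ) (M : Mat m n) (i : Fin m) (j : Fin n)
    (k : Fin m) (l : Fin n) : ℝ :=
  fderiv ℝ (fun N => gradient F N) M (EuclideanSpace.single (k, l) 1) (i, j)

/-- Uniform convexity with quadratic growth:
`θ|w₁−w₂|² ≤ (Dψ(w₁)−Dψ(w₂))·(w₁−w₂) ≤ Θ|w₁−w₂|²`. -/
def UnifConv {E : Type*} [NormedAddCommGroup E] [InnerProductSpace ℝ E] [CompleteSpace E]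
    (θ Θ : ℝ) (ψ : E → ℝ) : Prop :=
  ∀ w₁ w₂ : E, θ * ‖w₁ - w₂‖ ^ 2 ≤ ⟪gradient ψ w₁ - gradient ψ w₂, w₁ - w₂⟫ ∧
    ⟪gradient ψ w₁ - gradient ψ w₂, w₁ - w₂⟫ ≤ Θ * ‖w₁ - w₂‖ ^ 2

/-- Normalization `ψ(0) = 0`, `Dψ(0) = 0`. -/
def Normalized {E : Type*} [NormedAddCommGroup E] [InnerProductSpace ℝ E] [CompleteSpace E]
    (ψ : E → ℝ) : Prop := ψ 0 = 0 ∧ gradient ψ 0 = 0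

/-- A bounded domain (open, connected, bounded set). -/
def IsBddDomain {n : ℕ} (U : Set (Sp n)) : Prop :=
  IsOpen U ∧ IsConnected U ∧ Bornology.IsBounded U

/-- A smooth compactly supported space-time test function supported in `U × (0,T)`. -/
structure IsSTTest {n : ℕ} (U : Set (Sp n)) (T : ℝ) (φ : Sp n × ℝ → ℝ) : Prop where
  smooth : ContDiff ℝ ∞ φ
  cpt : HasCompactSupport φ
  supp : tsupport φ ⊆ U ×ˢ Set.Ioo 0 T

/-- A smooth compactly supported spatial test map with values in `ℝ^m`, supported in `U`. -/
structure IsSpaceTest {n m : ℕ} (U : Set (Sp n)) (w : Sp n → Tg m) : Prop where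
  smooth : ContDiff ℝ ∞ w
  cpt : HasCompactSupport w
  supp : tsupport w ⊆ U

/-- The Legendre transform `ψ*(z) = sup_w (z·w − ψ(w))`. -/
def legendre {E : Type*} [NormedAddCommGroup E] [InnerProductSpace ℝ E] (ψ : E → ℝ) (z : E) : ℝ :=
  ⨆ w : E, (⟪z, w⟫ - ψ w)

/-- `g` is the weak time derivative of `f` on `U × (0,T)`. -/
def IsWeakTimeDeriv {n m : ℕ} (U : Set (Sp n)) (T : ℝ) (f g : Sp n → ℝ → Tg m) : Prop :=
  ∀ φ : Sp n × ℝ → ℝ, IsSTTest U T φ →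
    ∫ p in U ×ˢ Set.Ioo 0 T, tDeriv φ p.1 p.2 • f p.1 p.2 =
      - ∫ p in U ×ˢ Set.Ioo 0 T, φ p • g p.1 p.2

/-- `g` is the weak partial derivative `∂f/∂x_j` of `f` on `U × (0,T)` (scalar version). -/
def IsWeakSpaceDeriv {n : ℕ} (U : Set (Sp n)) (T : ℝ) (j : Fin n) (f g : Sp n → ℝ → ℝ) : Prop :=
  ∀ φ : Sp n × ℝ → ℝ, IsSTTest U T φ →
    ∫ p in U ×ˢ Set.Ioo 0 T, fderiv ℝ φ p (EuclideanSpace.single j 1, 0) * f p.1 p.2 =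
      - ∫ p in U ×ˢ Set.Ioo 0 T, φ p * g p.1 p.2

/-- Local square integrability over `U × (0,T)`. -/
def L2locST {n : ℕ} {E : Type*} [NormedAddCommGroup E] (U : Set (Sp n)) (T : ℝ)
    (f : Sp n → ℝ → E) : Prop :=
  ∀ K : Set (Sp n), IsCompact K → K ⊆ U → ∀ t₀ t₁ : ℝ, 0 < t₀ → t₁ < T →
    IntegrableOn (fun p : Sp n × ℝ => ‖f p.1 p.2‖ ^ 2) (K ×ˢ Set.Icc t₀ t₁)

/-- Local `p`-th power integrability over `U × (0,T)` (`p` a real exponent). -/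
def LplocST {n : ℕ} {E : Type*} [NormedAddCommGroup E] (U : Set (Sp n)) (T : ℝ) (p : ℝ)
    (f : Sp n → ℝ → E) : Prop :=
  ∀ K : Set (Sp n), IsCompact K → K ⊆ U → ∀ t₀ t₁ : ℝ, 0 < t₀ → t₁ < T →
    IntegrableOn (fun q : Sp n × ℝ => ‖f q.1 q.2‖ ^ p) (K ×ˢ Set.Icc t₀ t₁)

/-- Membership in `L^∞_loc((0,T); L²_loc(U))`. -/
def LinfL2loc {n : ℕ} {E : Type*} [NormedAddCommGroup E] (U : Set (Sp n)) (T : ℝ)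
    (f : Sp n → ℝ → E) : Prop :=
  ∀ K : Set (Sp n), IsCompact K → K ⊆ U → ∀ t₀ t₁ : ℝ, 0 < t₀ → t₁ < T →
    ∃ C : ℝ, ∀ᵐ t ∂(volume.restrict (Set.Icc t₀ t₁)), ∫ x in K, ‖f x t‖ ^ 2 ≤ C

/-- A weak solution of `Dψ(v_t) = div DF(Dv)` on `U × (0,T)`, together with its weak
derivatives `v_t`, `Dv`, `Dv_t`. -/
structure WeakSolution {n m : ℕ} (ψ : Tg m → ℝ) (F : Mat m n → ℝ)
    (U : Set (Sp n)) (T : ℝ) where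
  v : Sp n → ℝ → Tg m
  vt : Sp n → ℝ → Tg m
  Dv : Sp n → ℝ → Mat m n
  Dvt : Sp n → ℝ → Mat m n
  meas_v : AEMeasurable (fun p : Sp n × ℝ => v p.1 p.2)
  meas_vt : AEMeasurable (fun p : Sp n × ℝ => vt p.1 p.2)
  meas_Dv : AEMeasurable (fun p : Sp n × ℝ => Dv p.1 p.2)
  meas_Dvt : AEMeasurable (fun p : Sp n × ℝ => Dvt p.1 p.2)
  l2loc_v : L2locST U T v
  weak_vt : IsWeakTimeDeriv U T v vt
  weak_Dv : ∀ (i : Fin m) (j : Fin n),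
    IsWeakSpaceDeriv U T j (fun x t => v x t i) (fun x t => Dv x t (i, j))
  weak_Dvt : ∀ (i : Fin m) (j : Fin n),
    IsWeakSpaceDeriv U T j (fun x t => vt x t i) (fun x t => Dvt x t (i, j))
  bdd_Dv : LinfL2loc U T Dv
  bdd_vt : LinfL2loc U T vt
  l2loc_Dvt : L2locST U T Dvt
  eqn : ∀ᵐ t ∂(volume.restrict (Set.Ioo 0 T)), ∀ w : Sp n → Tg m, IsSpaceTest U w →
    (∫ x in U, ⟪gradient ψ (vt x t), w x⟫) +
      (∫ x in U, ⟪gradient F (Dv x t), gradMat w x⟫) = 0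

/-- `D2v` is the weak spatial Hessian attached to the weak gradient `Dv`. -/
def IsWeakHess {n m : ℕ} (U : Set (Sp n)) (T : ℝ) (Dv : Sp n → ℝ → Mat m n)
    (D2v : Sp n → ℝ → Mat3 m n) : Prop :=
  AEMeasurable (fun p : Sp n × ℝ => D2v p.1 p.2) ∧
  ∀ (i : Fin m) (j k : Fin n),
    IsWeakSpaceDeriv U T k (fun x t => Dv x t (i, j)) (fun x t => D2v x t (i, j, k))

/-- `D3v` is the weak spatial third derivative attached to `D2v`. -/
def IsWeakThird {n m : ℕ} (U : Set (Sp n)) (T : ℝ) (D2v : Sp n → ℝ → Mat3 m n)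
    (D3v : Sp n → ℝ → Mat4 m n) : Prop :=
  AEMeasurable (fun p : Sp n × ℝ => D3v p.1 p.2) ∧
  ∀ (i : Fin m) (j k l : Fin n),
    IsWeakSpaceDeriv U T l (fun x t => D2v x t (i, j, k)) (fun x t => D3v x t (i, j, k, l))

/-- The parabolic cylinder `Q_r(x,t) = B_r(x) × (t−r²/2, t+r²/2)`. -/
def pcyl {n : ℕ} (x : Sp n) (t r : ℝ) : Set (Sp n × ℝ) :=
  Metric.ball x r ×ˢ Set.Ioo (t - r ^ 2 / 2) (t + r ^ 2 / 2)

/-- The average of `f` over a set `Q` of space-time. -/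
def pavg {n : ℕ} {E : Type*} [NormedAddCommGroup E] [NormedSpace ℝ E]
    (Q : Set (Sp n × ℝ)) (f : Sp n → ℝ → E) : E :=
  ((volume Q).toReal)⁻¹ • ∫ p in Q, f p.1 p.2

/-- First-order Taylor term: the matrix `((D²v)_Q z)^i_j = Σ_k (D²v)_Q(i,j,k) z_k`. -/
def taylor1 {m n : ℕ} (N : Mat3 m n) (z : Sp n) : Mat m n :=
  matOf fun q => ∑ k, N (q.1, q.2, k) * z k

/-- The local space-time energy `E(x,t,r)` of a solution, built from `v_t`, `Dv`, `D²v`. -/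
def energy {n m : ℕ} (vt : Sp n → ℝ → Tg m) (Dv : Sp n → ℝ → Mat m n)
    (D2v : Sp n → ℝ → Mat3 m n) (x : Sp n) (t r : ℝ) : ℝ :=
  pavg (pcyl x t r) (fun y s => ‖vt y s - pavg (pcyl x t r) vt‖ ^ 2) +
  pavg (pcyl x t r) (fun y s =>
    ‖r⁻¹ • (Dv y s - pavg (pcyl x t r) Dv - taylor1 (pavg (pcyl x t r) D2v) (y - x))‖ ^ 2) +
  pavg (pcyl x t r) (fun y s => ‖D2v y s - pavg (pcyl x t r) D2v‖ ^ 2)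

/-- The `H¹(V)`-distance between two pairs (function, gradient). -/
def h1dist {n m : ℕ} (V : Set (Sp n)) (u₁ : Sp n → Tg m) (Du₁ : Sp n → Mat m n)
    (u₂ : Sp n → Tg m) (Du₂ : Sp n → Mat m n) : ℝ :=
  (∫ x in V, (‖u₁ x - u₂ x‖ ^ 2 + ‖Du₁ x - Du₂ x‖ ^ 2)) ^ (1/2 : ℝ)

/-- The `H⁻¹(V)`-norm of `g`, as a supremum of pairings against test maps with
`‖Dw‖_{L²(V)} ≤ 1`. -/
def hneg1norm {n m : ℕ} (V : Set (Sp n)) (g : Sp n → Tg m) : ℝ :=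
  ⨆ w : {w : Sp n → Tg m // IsSpaceTest V w ∧ ∫ x in V, ‖gradMat w x‖ ^ 2 ≤ 1},
    ∫ x in V, ⟪g x, w.1 x⟫

/-- Classical time derivative. -/
def cvt {n m : ℕ} (v : Sp n → ℝ → Tg m) (x : Sp n) (t : ℝ) : Tg m := deriv (fun s => v x s) t
/-- Classical spatial gradient matrix. -/
def cDv {n m : ℕ} (v : Sp n → ℝ → Tg m) (x : Sp n) (t : ℝ) : Mat m n :=
  gradMat (fun y => v y t) x
/-- Classical spatial gradient of the time derivative. -/
def cDvt {n m : ℕ} (v : Sp n → ℝ → Tg m) (x : Sp n) (t : ℝ) : Mat m n :=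
  gradMat (fun y => cvt v y t) x

/-- A classical (smooth) solution of `Dψ(v_t) = div DF(Dv)` in `U × (0,T)`. -/
def IsClassicalSolution {n m : ℕ} (ψ : Tg m → ℝ) (F : Mat m n → ℝ) (U : Set (Sp n)) (T : ℝ)
    (v : Sp n → ℝ → Tg m) : Prop :=
  ContDiffOn ℝ ∞ (fun p : Sp n × ℝ => v p.1 p.2) (U ×ˢ Set.Ioo 0 T) ∧
  ∀ x ∈ U, ∀ t ∈ Set.Ioo (0:ℝ) T, ∀ i : Fin m,
    gradient ψ (cvt v x t) i =
      ∑ j, fderiv ℝ (fun y => gradient F (cDv v y t) (i, j)) x (EuclideanSpace.single j 1)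

/-! With `L(w) = ⟪Dψ(w), w⟫ - ψ(w)`, convexity of `ψ` gives `ψ*(Dψ(w)) = L(w)`, and along
`w = vₜ` the time derivative of `L(w)` is `⟪D²ψ(vₜ) vₜₜ, vₜ⟫`. Differentiating under the
integral sign, the derivative of `∫ φ ψ*(Dψ(vₜ))` is `∫ φₜ ψ*(Dψ(vₜ)) + φ ⟪D²ψ(vₜ) vₜₜ, vₜ⟫`.
Integrating the equation by parts against a test map `u` gives the weak form
`∫ ⟪Dψ(vₜ), u⟫ + ∫ DF(Dv) · Du = 0`.
Differentiating it in time with `u = φ vₜ` frozen at the time `t`, and using `∂ₜ Dv = D vₜ` and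
`D(φ vₜ) = φ Dvₜ + vₜ ⊗ Dφ`, turns the last term into
`-∫ φ D²F(Dv)(Dvₜ, Dvₜ) - ∫ D²F(Dv)(Dvₜ, vₜ ⊗ Dφ)`. -/

section Legendre

variable {E : Type*} [NormedAddCommGroup E] [InnerProductSpace ℝ E] [CompleteSpace E]
  {ψ : E → ℝ}

theorem ContDiff.gradient {k l : WithTop ℕ∞} (hψ : ContDiff ℝ l ψ) (hkl : k + 1 ≤ l) :
    ContDiff ℝ k (gradient ψ) :=
  (InnerProductSpace.toDual ℝ E).symm.contDiff.comp (hψ.fderiv_right hkl)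

theorem add_inner_gradient_sub_le (hψ : Differentiable ℝ ψ)
    (hmono : ∀ y z, 0 ≤ ⟪gradient ψ y - gradient ψ z, y - z⟫) (w u : E) :
    ψ w + ⟪gradient ψ w, u - w⟫ ≤ ψ u := by
  set γ : ℝ → E := fun τ => w + τ • (u - w)
  have hγ : ∀ τ, HasDerivAt (fun τ => ψ (γ τ)) ⟪gradient ψ (γ τ), u - w⟫ τ := fun τ => by
    rw [inner_gradient_left]
    exact (hψ _).hasFDerivAt.comp_hasDerivAt τ
      (((hasDerivAt_id τ).smul_const (u - w)).const_add w |>.congr_deriv (one_smul ℝ _))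
  -- mean value theorem on `[0, 1]`, then monotonicity of `∇ψ` between `w` and `γ τ`
  obtain ⟨τ, hτ, hslope⟩ := exists_hasDerivAt_eq_slope (fun τ => ψ (γ τ)) _ zero_lt_one
    (fun τ _ => (hγ τ).continuousAt.continuousWithinAt) (fun τ _ => hγ τ)
  have hmono' := hmono (γ τ) w
  simp only [γ, add_sub_cancel_left, inner_smul_right, inner_sub_left] at hmono'
  simp only [γ, zero_smul, add_zero, one_smul, add_sub_cancel, sub_zero, div_one] at hslope
  nlinarith [hτ.1]

theorem legendre_gradient_eq (hψ : Differentiable ℝ ψ)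
    (hmono : ∀ y z, 0 ≤ ⟪gradient ψ y - gradient ψ z, y - z⟫) (w : E) :
    legendre ψ (gradient ψ w) = ⟪gradient ψ w, w⟫ - ψ w := by
  have hle : ∀ u, ⟪gradient ψ w, u⟫ - ψ u ≤ ⟪gradient ψ w, w⟫ - ψ w := fun u => by
    have := add_inner_gradient_sub_le hψ hmono w u
    rw [inner_sub_right] at this
    linarith
  exact le_antisymm (ciSup_le hle) (le_ciSup ⟨_, Set.forall_mem_range.2 hle⟩ w)

theorem continuous_legendre_gradient (hψ : ContDiff ℝ 1 ψ)
    (hmono : ∀ y z, 0 ≤ ⟪gradient ψ y - gradient ψ z, y - z⟫) :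
    Continuous fun w => legendre ψ (gradient ψ w) := by
  simp only [legendre_gradient_eq (hψ.differentiable one_ne_zero) hmono]
  have hg : Continuous (gradient ψ) := (hψ.gradient (k := 0) (by norm_num)).continuous
  fun_prop

theorem HasDerivAt.legendre_gradient {w : ℝ → E} {w' : E} {s : ℝ} (hψ : Differentiable ℝ ψ)
    (hmono : ∀ y z, 0 ≤ ⟪gradient ψ y - gradient ψ z, y - z⟫)
    (hg : DifferentiableAt ℝ (gradient ψ) (w s)) (hw : HasDerivAt w w' s) :
    HasDerivAt (fun s => legendre ψ (gradient ψ (w s)))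
      ⟪fderiv ℝ (gradient ψ) (w s) w', w s⟫ s := by
  simp only [legendre_gradient_eq hψ hmono]
  have hψw : HasDerivAt (fun s => ψ (w s)) ⟪gradient ψ (w s), w'⟫ s := by
    rw [inner_gradient_left]
    exact (hψ _).hasFDerivAt.comp_hasDerivAt s hw
  refine (((hg.hasFDerivAt.comp_hasDerivAt s hw).inner ℝ hw).sub hψw).congr_deriv ?_
  simp only [Function.comp_apply]
  ring

end Legendre

section Support

theorem ContDiffOn.contDiff_of_tsupport_subset {E F : Type*} [NormedAddCommGroup E]
    [NormedSpace ℝ E] [NormedAddCommGroup F] [NormedSpace ℝ F] {f : E → F} {U : Set E}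
    {k : WithTop ℕ∞} (hf : ContDiffOn ℝ k f U) (hU : IsOpen U) (hsupp : tsupport f ⊆ U) :
    ContDiff ℝ k f := by
  refine contDiff_iff_contDiffAt.2 fun x => ?_
  by_cases hx : x ∈ U
  · exact hf.contDiffAt (hU.mem_nhds hx)
  · exact contDiffAt_const.congr_of_eventuallyEq
      (notMem_tsupport_iff_eventuallyEq.1 fun h => hx (hsupp h))

theorem ContDiffOn.uncurry_right {E F G : Type*} [NormedAddCommGroup E] [NormedSpace ℝ E]
    [NormedAddCommGroup F] [NormedSpace ℝ F] [NormedAddCommGroup G] [NormedSpace ℝ G]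
    {f : E → F → G} {s : Set E} {t : Set F} {k : WithTop ℕ∞} (b : F) (hb : b ∈ t)
    (hf : ContDiffOn ℝ k (Function.uncurry f) (s ×ˢ t)) : ContDiffOn ℝ k (fun a => f a b) s :=
  hf.comp (contDiff_id.prodMk contDiff_const).contDiffOn fun _ ha => ⟨ha, hb⟩

theorem tsupport_slice_subset {X Y α : Type*} [TopologicalSpace X] [TopologicalSpace Y] [Zero α]
    (φ : X × Y → α) (t : Y) : tsupport (fun x => φ (x, t)) ⊆ Prod.fst '' tsupport φ :=
  fun x hx =>
    ⟨(x, t), tsupport_comp_subset_preimage φ (continuous_id.prodMk continuous_const) hx, rfl⟩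

end Support

section ParametricIntegral

variable {X Y F : Type*} [TopologicalSpace X] [T2Space X] [MeasurableSpace X]
  [OpensMeasurableSpace X] {μ : Measure X} [IsFiniteMeasureOnCompacts μ]
  [NormedAddCommGroup F] {U K : Set X}

theorem ContinuousOn.integrableOn_of_forall_sdiff_eq_zero {f : X → F} (hf : ContinuousOn f U)
    (hU : MeasurableSet U) (hK : IsCompact K) (hKU : K ⊆ U) (h0 : ∀ x ∈ U \ K, f x = 0) :
    IntegrableOn f U μ :=
  ((hf.mono hKU).integrableOn_compact hK).of_forall_sdiff_eq_zero hU h0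

theorem ContinuousOn.integrableOn_slice [TopologicalSpace Y] {g : X × Y → F} {J : Set Y}
    {C : Set (X × Y)} (hg : ContinuousOn g (U ×ˢ J)) (hU : MeasurableSet U) (hC : IsCompact C)
    (hCUJ : C ⊆ U ×ˢ J) (h0 : ∀ p ∉ C, g p = 0) {t : Y} (ht : t ∈ J) :
    IntegrableOn (fun x => g (x, t)) U μ :=
  (hg.comp (continuous_id.prodMk continuous_const).continuousOn fun _ hx => ⟨hx, ht⟩)
    |>.integrableOn_of_forall_sdiff_eq_zero hU (hC.image continuous_fst)
      (image_subset_iff.2 fun _ hp => (hCUJ hp).1) fun _ hx => h0 _ fun h => hx.2 ⟨_, h, rfl⟩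

theorem hasDerivAt_setIntegral_of_continuousOn [NormedSpace ℝ F] [CompleteSpace F]
    {f f' : X → ℝ → F} {J : Set ℝ} {t : ℝ} (hU : MeasurableSet U) (hK : IsCompact K)
    (hKU : K ⊆ U) (hJ : IsOpen J) (ht : t ∈ J)
    (hf : ContinuousOn (Function.uncurry f) (U ×ˢ J))
    (hf' : ContinuousOn (Function.uncurry f') (U ×ˢ J))
    (hderiv : ∀ x ∈ U, ∀ s ∈ J, HasDerivAt (f x) (f' x s) s)
    (hzero : ∀ x ∈ U \ K, ∀ s ∈ J, f x s = 0) :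
    HasDerivAt (fun s => ∫ x in U, f x s ∂μ) (∫ x in U, f' x t ∂μ) t := by
  obtain ⟨ε, hε, hball⟩ := Metric.isOpen_iff.1 hJ t ht
  have hIcc : Icc (t - ε / 2) (t + ε / 2) ⊆ J := fun s hs =>
    hball (by rw [mem_ball, Real.dist_eq, abs_lt]; constructor <;> linarith [hs.1, hs.2])
  have hball' : ball t (ε / 2) ⊆ Icc (t - ε / 2) (t + ε / 2) := fun s hs => by
    rw [mem_ball, Real.dist_eq, abs_lt] at hs; constructor <;> linarith [hs.1, hs.2]
  have hslice : ∀ g : X → ℝ → F, ContinuousOn (Function.uncurry g) (U ×ˢ J) →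
      ∀ s ∈ J, ContinuousOn (g · s) K := fun g hg s hs =>
    hg.comp (continuousOn_id.prodMk continuousOn_const) fun x hx => ⟨hKU hx, hs⟩
  have hzero' : ∀ x ∈ U \ K, f' x t = 0 := fun x hx =>
    (hderiv x hx.1 t ht).unique <| (hasDerivAt_const t (0 : F)).congr_of_eventuallyEq <|
      Filter.eventually_of_mem (hJ.mem_nhds ht) fun s hs => hzero x hx s hs
  obtain ⟨C, hC⟩ := (hK.prod isCompact_Icc).exists_bound_of_continuousOn
    (hf'.mono (prod_mono hKU hIcc))
  rw [setIntegral_eq_of_subset_of_forall_sdiff_eq_zero hU hKU hzero']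
  refine (hasDerivAt_integral_of_dominated_loc_of_deriv_le (μ := μ.restrict K)
    (F := fun s x => f x s) (F' := fun s x => f' x s) (bound := fun _ => C)
    (ball_mem_nhds t (half_pos hε)) ?_ ?_ ?_ ?_ ?_ ?_).2.congr_of_eventuallyEq ?_
  · filter_upwards [hJ.mem_nhds ht] with s hs
    exact ((hslice f hf s hs).integrableOn_compact hK).aestronglyMeasurable
  · exact (hslice f hf t ht).integrableOn_compact hK
  · exact ((hslice f' hf' t ht).integrableOn_compact hK).aestronglyMeasurable
  · filter_upwards [ae_restrict_mem hK.measurableSet] with x hx s hs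
    exact hC (x, s) ⟨hx, hball' hs⟩
  · exact integrableOn_const hK.measure_lt_top.ne
  · filter_upwards [ae_restrict_mem hK.measurableSet] with x hx s hs
    exact hderiv x (hKU hx) s (hIcc (hball' hs))
  · filter_upwards [hJ.mem_nhds ht] with s hs
    exact setIntegral_eq_of_subset_of_forall_sdiff_eq_zero hU hKU fun x hx => hzero x hx s hs

end ParametricIntegral

section SpaceTime

variable {n m : ℕ}

theorem hasFDerivAt_slice {F : Type*} [NormedAddCommGroup F] [NormedSpace ℝ F]
    {g : Sp n × ℝ → F} {x : Sp n} {s : ℝ} (hg : DifferentiableAt ℝ g (x, s)) :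
    HasFDerivAt (fun y => g (y, s)) ((fderiv ℝ g (x, s)).comp (.inl ℝ (Sp n) ℝ)) x :=
  hg.hasFDerivAt.comp x (hasFDerivAt_prodMk_left x s)

theorem hasDerivAt_slice {F : Type*} [NormedAddCommGroup F] [NormedSpace ℝ F]
    {g : Sp n × ℝ → F} {x : Sp n} {s : ℝ} (hg : DifferentiableAt ℝ g (x, s)) :
    HasDerivAt (fun s => g (x, s)) (fderiv ℝ g (x, s) (0, 1)) s :=
  hg.hasFDerivAt.comp_hasDerivAt s ((hasDerivAt_const s x).prodMk (hasDerivAt_id s))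

theorem gradient_apply_eq_fderiv {ι : Type*} [Fintype ι] [DecidableEq ι]
    (f : EuclideanSpace ℝ ι → ℝ) (x : EuclideanSpace ℝ ι) (j : ι) :
    gradient f x j = fderiv ℝ f x (EuclideanSpace.single j 1) := by
  have := EuclideanSpace.inner_single_right j (1 : ℝ) (gradient f x)
  rw [inner_gradient_left] at this
  simpa using this.symm

theorem spGrad_eq_gradient {φ : Sp n × ℝ → ℝ} {x : Sp n} {t : ℝ}
    (hφ : DifferentiableAt ℝ φ (x, t)) : spGrad φ x t = gradient (fun y => φ (y, t)) x := by
  ext j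
  rw [gradient_apply_eq_fderiv, (hasFDerivAt_slice hφ).fderiv]
  rfl

theorem gradMat_smul {f : Sp n → ℝ} {w : Sp n → Tg m} {x : Sp n}
    (hf : DifferentiableAt ℝ f x) (hw : DifferentiableAt ℝ w x) :
    gradMat (fun y => f y • w y) x = f x • gradMat w x + tens (w x) (gradient f x) := by
  ext q
  simp [gradMat, tens, matOf, fderiv_fun_smul hf hw, gradient_apply_eq_fderiv, mul_comm]

theorem gradMat_of_notMem_tsupport {u : Sp n → Tg m} {x : Sp n} (hx : x ∉ tsupport u) :
    gradMat u x = 0 := by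
  ext q
  simp [gradMat, matOf, fderiv_of_notMem_tsupport ℝ hx]

theorem continuous_gradMat {u : Sp n → Tg m} (hu : ContDiff ℝ 1 u) : Continuous (gradMat u) :=
  (PiLp.continuousLinearEquiv 2 ℝ fun _ : Fin m × Fin n => ℝ).symm.continuous.comp <|
    continuous_pi fun q => (EuclideanSpace.proj q.1).continuous.comp <|
      (hu.continuous_fderiv one_ne_zero).clm_apply continuous_const

theorem tens_zero_right (w : Tg m) : tens w (0 : Sp n) = 0 := by
  ext q
  simp [tens, matOf]

theorem continuous_tens : Continuous fun p : Tg m × Sp n => tens p.1 p.2 :=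
  (PiLp.continuousLinearEquiv 2 ℝ fun _ : Fin m × Fin n => ℝ).symm.continuous.comp <|
    continuous_pi fun q => ((EuclideanSpace.proj q.1).continuous.comp continuous_fst).mul
      ((EuclideanSpace.proj q.2).continuous.comp continuous_snd)

variable {φ : Sp n × ℝ → ℝ}

theorem continuous_tDeriv (hφ : ContDiff ℝ 1 φ) : Continuous (Function.uncurry (tDeriv φ)) :=
  (hφ.continuous_fderiv one_ne_zero).clm_apply continuous_const

theorem continuous_spGrad (hφ : ContDiff ℝ 1 φ) : Continuous (Function.uncurry (spGrad φ)) :=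
  (PiLp.continuousLinearEquiv 2 ℝ fun _ : Fin n => ℝ).symm.continuous.comp <|
    continuous_pi fun _ => (hφ.continuous_fderiv one_ne_zero).clm_apply continuous_const

theorem tDeriv_of_notMem_tsupport {x : Sp n} {t : ℝ} (h : (x, t) ∉ tsupport φ) :
    tDeriv φ x t = 0 := by
  simp [tDeriv, fderiv_of_notMem_tsupport ℝ h]

theorem spGrad_of_notMem_tsupport {x : Sp n} {t : ℝ} (h : (x, t) ∉ tsupport φ) :
    spGrad φ x t = 0 := by
  ext j
  simp [spGrad, fderiv_of_notMem_tsupport ℝ h]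

end SpaceTime

section ClassicalDerivatives

variable {n m : ℕ} {v : Sp n → ℝ → Tg m} {x : Sp n} {s : ℝ}

def spatialMat (m n : ℕ) : ((Sp n × ℝ) →L[ℝ] Tg m) →L[ℝ] Mat m n :=
  (PiLp.continuousLinearEquiv 2 ℝ fun _ : Fin m × Fin n => ℝ).symm.toContinuousLinearMap.comp
    (ContinuousLinearMap.pi fun q => (EuclideanSpace.proj q.1).comp
      (ContinuousLinearMap.apply ℝ (Tg m) (EuclideanSpace.single q.2 1, 0)))

theorem spatialMat_apply (L : (Sp n × ℝ) →L[ℝ] Tg m) (q : Fin m × Fin n) :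
    spatialMat m n L q = L (EuclideanSpace.single q.2 1, 0) q.1 := rfl

theorem hasDerivAt_cvt (hv : DifferentiableAt ℝ (Function.uncurry v) (x, s)) :
    HasDerivAt (v x) (cvt v x s) s :=
  (hv.comp s (differentiableAt_const x |>.prodMk differentiableAt_id)).hasDerivAt

theorem cvt_eq_fderiv (hv : DifferentiableAt ℝ (Function.uncurry v) (x, s)) :
    cvt v x s = fderiv ℝ (Function.uncurry v) (x, s) (0, 1) :=
  (hasDerivAt_cvt hv).unique (hasDerivAt_slice hv)

theorem cDv_eq_spatialMat (hv : DifferentiableAt ℝ (Function.uncurry v) (x, s)) :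
    cDv v x s = spatialMat m n (fderiv ℝ (Function.uncurry v) (x, s)) := by
  have h : fderiv ℝ (fun y => v y s) x = _ := (hasFDerivAt_slice hv).fderiv
  ext q
  simp only [cDv, gradMat, matOf, h, spatialMat_apply]
  rfl

variable {P : Set (Sp n × ℝ)} {k l : WithTop ℕ∞}

theorem ContDiffOn.uncurry_cvt (hv : ContDiffOn ℝ l (Function.uncurry v) P) (hP : IsOpen P)
    (hkl : k + 1 ≤ l) : ContDiffOn ℝ k (Function.uncurry (cvt v)) P :=
  ((hv.fderiv_of_isOpen hP hkl).clm_apply contDiffOn_const).congr fun _ hp =>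
    cvt_eq_fderiv ((hv.of_le (le_add_self.trans hkl)).differentiableOn_one.differentiableAt
      (hP.mem_nhds hp))

theorem ContDiffOn.uncurry_cDv (hv : ContDiffOn ℝ l (Function.uncurry v) P) (hP : IsOpen P)
    (hkl : k + 1 ≤ l) : ContDiffOn ℝ k (Function.uncurry (cDv v)) P :=
  ((spatialMat m n).contDiff.comp_contDiffOn (hv.fderiv_of_isOpen hP hkl)).congr fun _ hp =>
    cDv_eq_spatialMat ((hv.of_le (le_add_self.trans hkl)).differentiableOn_one.differentiableAt
      (hP.mem_nhds hp))

theorem hasDerivAt_cDv (hv : ContDiffOn ℝ 2 (Function.uncurry v) P) (hP : IsOpen P)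
    (hp : (x, s) ∈ P) : HasDerivAt (cDv v x) (cDvt v x s) s := by
  set D := fderiv ℝ (Function.uncurry v)
  have hD : ContDiffOn ℝ 1 D P := hv.fderiv_of_isOpen hP (by norm_num)
  have hDp : DifferentiableAt ℝ D (x, s) :=
    (hD.differentiableOn one_ne_zero).differentiableAt (hP.mem_nhds hp)
  have hdiff : ∀ p ∈ P, DifferentiableAt ℝ (Function.uncurry v) p := fun p hp =>
    (hv.differentiableOn two_ne_zero).differentiableAt (hP.mem_nhds hp)
  have hvt : DifferentiableAt ℝ (Function.uncurry (cvt v)) (x, s) :=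
    ((hv.uncurry_cvt hP (k := 1) (by norm_num)).differentiableOn one_ne_zero).differentiableAt
      (hP.mem_nhds hp)
  have hsymm := (hv.contDiffAt (hP.mem_nhds hp)).isSymmSndFDerivAt (by simp)
  have hvt_eq : fderiv ℝ (Function.uncurry (cvt v)) (x, s) =
      (ContinuousLinearMap.apply ℝ (Tg m) ((0 : Sp n), (1 : ℝ))).comp (fderiv ℝ D (x, s)) := by
    have hev : Function.uncurry (cvt v) =ᶠ[𝓝 (x, s)] fun p => D p (0, 1) :=
      Filter.eventually_of_mem (hP.mem_nhds hp) fun p hp => cvt_eq_fderiv (hdiff p hp)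
    rw [hev.fderiv_eq]
    exact ((ContinuousLinearMap.apply ℝ (Tg m) ((0 : Sp n), (1 : ℝ))).hasFDerivAt.comp
      (x, s) hDp.hasFDerivAt).fderiv
  have hderiv : HasDerivAt (fun s => spatialMat m n (D (x, s)))
      (spatialMat m n (fderiv ℝ D (x, s) (0, 1))) s :=
    (spatialMat m n).hasFDerivAt.comp_hasDerivAt s (hasDerivAt_slice hDp)
  refine (hderiv.congr_of_eventuallyEq ?_).congr_deriv ?_
  · filter_upwards [(continuous_const.prodMk continuous_id).continuousAt.preimage_mem_nhds
      (hP.mem_nhds hp)] with s' hs' using cDv_eq_spatialMat (hdiff _ hs')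
  · rw [cDvt, ← cDv, cDv_eq_spatialMat hvt, hvt_eq]
    ext q
    simp only [spatialMat_apply, ContinuousLinearMap.comp_apply,
      ContinuousLinearMap.apply_apply]
    rw [hsymm]

end ClassicalDerivatives

section Divergence

variable {n m : ℕ}

theorem integral_fderiv_eq_zero {E : Type*} [NormedAddCommGroup E] [NormedSpace ℝ E]
    [MeasurableSpace E] [BorelSpace E] [FiniteDimensional ℝ E] {μ : Measure E}
    [μ.IsAddHaarMeasure] {g : E → ℝ} (hg : ContDiff ℝ 1 g) (hc : HasCompactSupport g) (w : E) :
    ∫ x, fderiv ℝ g x w ∂μ = 0 := by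
  have hg' : Continuous fun x => fderiv ℝ g x w :=
    (hg.continuous_fderiv one_ne_zero).clm_apply continuous_const
  simpa using integral_mul_fderiv_eq_neg_fderiv_mul_of_integrable (μ := μ) (f := fun _ => 1)
    (v := w) (by simp) (by simpa using hg'.integrable_of_hasCompactSupport (hc.fderiv_apply ℝ w))
    (by simpa using hg.continuous.integrable_of_hasCompactSupport hc)
    (fun _ _ => differentiableAt_const 1) (fun x _ => hg.differentiable one_ne_zero x)

def divMat (G : Sp n → Mat m n) (x : Sp n) : Tg m :=
  vecOf fun i => ∑ j, fderiv ℝ (fun y => G y (i, j)) x (EuclideanSpace.single j 1)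

theorem continuousOn_divMat {G : Sp n → Mat m n} {U : Set (Sp n)} (hU : IsOpen U)
    (hG : ContDiffOn ℝ 1 G U) : ContinuousOn (divMat G) U :=
  (PiLp.continuousLinearEquiv 2 ℝ fun _ : Fin m => ℝ).symm.continuous.comp_continuousOn <|
    continuousOn_pi.2 fun i => continuousOn_finsetSum _ fun j _ =>
      ((((EuclideanSpace.proj (i, j)).contDiff.comp_contDiffOn hG).continuousOn_fderiv_of_isOpen
        hU le_rfl).clm_apply continuousOn_const)

theorem sum_fderiv_sum_mul_eq_inner_add_inner {G : Sp n → Mat m n} {u : Sp n → Tg m} {x : Sp n}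
    (hG : DifferentiableAt ℝ G x) (hu : DifferentiableAt ℝ u x) :
    ∑ j, fderiv ℝ (fun y => ∑ i, G y (i, j) * u y i) x (EuclideanSpace.single j 1) =
      ⟪G x, gradMat u x⟫ + ⟪divMat G x, u x⟫ := by
  have hGij : ∀ q, HasFDerivAt (fun y => G y q) ((EuclideanSpace.proj q).comp (fderiv ℝ G x)) x :=
    fun q => (EuclideanSpace.proj (𝕜 := ℝ) q).hasFDerivAt.comp x hG.hasFDerivAt
  have hui : ∀ i, HasFDerivAt (fun y => u y i) ((EuclideanSpace.proj i).comp (fderiv ℝ u x)) x :=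
    fun i => (EuclideanSpace.proj (𝕜 := ℝ) i).hasFDerivAt.comp x hu.hasFDerivAt
  have hsum : ∀ j, HasFDerivAt (fun y => ∑ i, G y (i, j) * u y i) _ x := fun j =>
    HasFDerivAt.fun_sum fun i _ => (hGij (i, j)).mul (hui i)
  have hGf : ∀ q, fderiv ℝ (fun y => G y q) x = _ := fun q => (hGij q).fderiv
  simp only [(hsum _).fderiv, hGf, divMat, gradMat, vecOf, matOf,
    PiLp.inner_apply, Fintype.sum_prod_type]
  simp [Finset.sum_add_distrib, Finset.mul_sum, mul_comm]
  rw [Finset.sum_comm (γ := Fin n), Finset.sum_comm (γ := Fin n) (f := fun j i => u x i * _)]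

theorem integral_inner_gradMat_eq_neg_integral_inner_divMat {G : Sp n → Mat m n}
    {u : Sp n → Tg m} {U : Set (Sp n)} (hU : IsOpen U) (hG : ContDiffOn ℝ 1 G U)
    (hu : ContDiff ℝ 1 u) (hc : HasCompactSupport u) (hsupp : tsupport u ⊆ U) :
    ∫ x in U, ⟪G x, gradMat u x⟫ = -∫ x in U, ⟪divMat G x, u x⟫ := by
  set g : Fin n → Sp n → ℝ := fun j y => ∑ i, G y (i, j) * u y i
  have hg_supp : ∀ j, tsupport (g j) ⊆ tsupport u := fun j => closure_mono fun y hy => by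
    contrapose! hy
    simp [g, Function.notMem_support.1 hy]
  have hg : ∀ j, ContDiff ℝ 1 (g j) := fun j =>
    ContDiffOn.contDiff_of_tsupport_subset (ContDiffOn.sum fun i _ =>
      ((EuclideanSpace.proj (𝕜 := ℝ) (i, j)).contDiff.comp_contDiffOn hG).mul
        ((EuclideanSpace.proj (𝕜 := ℝ) i).contDiff.comp hu).contDiffOn) hU
      ((hg_supp j).trans hsupp)
  have hg_c : ∀ j, HasCompactSupport (g j) := fun j => hc.mono' (subset_closure.trans (hg_supp j))
  have hGd : ∀ x ∈ U, DifferentiableAt ℝ G x := fun x hx =>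
    (hG.differentiableOn one_ne_zero).differentiableAt (hU.mem_nhds hx)
  have hint₁ : IntegrableOn (fun x => ⟪G x, gradMat u x⟫) U :=
    (hG.continuousOn.inner (continuous_gradMat hu).continuousOn)
      |>.integrableOn_of_forall_sdiff_eq_zero hU.measurableSet hc hsupp
        fun x hx => by simp [gradMat_of_notMem_tsupport hx.2]
  have hint₂ : IntegrableOn (fun x => ⟪divMat G x, u x⟫) U :=
    ((continuousOn_divMat hU hG).inner hu.continuous.continuousOn)
      |>.integrableOn_of_forall_sdiff_eq_zero hU.measurableSet hc hsupp
        fun x hx => by simp [image_eq_zero_of_notMem_tsupport hx.2]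
  rw [eq_neg_iff_add_eq_zero, ← integral_add hint₁ hint₂]
  calc ∫ x in U, (⟪G x, gradMat u x⟫ + ⟪divMat G x, u x⟫)
      = ∫ x in U, ∑ j, fderiv ℝ (g j) x (EuclideanSpace.single j 1) :=
        setIntegral_congr_fun hU.measurableSet fun x hx =>
          (sum_fderiv_sum_mul_eq_inner_add_inner (hGd x hx) (hu.differentiable one_ne_zero x)).symm
    _ = ∫ x, ∑ j, fderiv ℝ (g j) x (EuclideanSpace.single j 1) :=
        setIntegral_eq_integral_of_forall_compl_eq_zero fun x hx => Finset.sum_eq_zero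
          fun j _ => by simp [fderiv_of_notMem_tsupport ℝ fun h => hx (hsupp (hg_supp j h))]
    _ = 0 := by
        rw [integral_finsetSum _ fun j _ => ((hg j).continuous_fderiv one_ne_zero).clm_apply
          continuous_const |>.integrable_of_hasCompactSupport ((hg_c j).fderiv_apply ℝ _)]
        simp [integral_fderiv_eq_zero (hg _) (hg_c _)]

end Divergence

section ClassicalSolution

variable {n m : ℕ} {ψ : Tg m → ℝ} {F : Mat m n → ℝ} {U : Set (Sp n)} {J : Set ℝ} {T : ℝ}
  {v : Sp n → ℝ → Tg m} {φ : Sp n × ℝ → ℝ} {s t : ℝ}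

theorem IsClassicalSolution.contDiffOn_two (hv : IsClassicalSolution ψ F U T v) :
    ContDiffOn ℝ 2 (Function.uncurry v) (U ×ˢ Ioo 0 T) :=
  hv.1.of_le (WithTop.coe_le_coe.2 le_top)

theorem IsClassicalSolution.integral_inner_add_integral_inner_eq_zero
    (hv : IsClassicalSolution ψ F U T v) (hU : IsOpen U) (hF : ContDiff ℝ 2 F)
    (hs : s ∈ Ioo 0 T) {u : Sp n → Tg m} (hu : ContDiff ℝ 1 u) (hc : HasCompactSupport u)
    (hsupp : tsupport u ⊆ U) :
    (∫ x in U, ⟪gradient ψ (cvt v x s), u x⟫) + ∫ x in U, ⟪gradient F (cDv v x s), gradMat u x⟫ =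
      0 := by
  have hG : ContDiffOn ℝ 1 (fun y => gradient F (cDv v y s)) U :=
    (hF.gradient (by norm_num)).comp_contDiffOn <|
      (hv.contDiffOn_two.uncurry_cDv (hU.prod isOpen_Ioo) (by norm_num)).uncurry_right s hs
  have hdiv : ∀ x ∈ U, ⟪gradient ψ (cvt v x s), u x⟫ =
      ⟪divMat (fun y => gradient F (cDv v y s)) x, u x⟫ := fun x hx => by
    congr 1
    ext i
    exact hv.2 x hx s hs i
  rw [setIntegral_congr_fun hU.measurableSet hdiv,
    integral_inner_gradMat_eq_neg_integral_inner_divMat hU hG hu hc hsupp, add_neg_cancel]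

theorem IsClassicalSolution.integral_inner_fderiv_gradient_eq
    (hv : IsClassicalSolution ψ F U T v) (hU : IsOpen U) (hψ : ContDiff ℝ 2 ψ)
    (hF : ContDiff ℝ 2 F) (ht : t ∈ Ioo 0 T) {u : Sp n → Tg m} (hu : ContDiff ℝ 1 u)
    (hc : HasCompactSupport u) (hsupp : tsupport u ⊆ U) :
    ∫ x in U, ⟪fderiv ℝ (gradient ψ) (cvt v x t) (cvt (cvt v) x t), u x⟫ =
      -∫ x in U, hessBil F (cDv v x t) (cDvt v x t) (gradMat u x) := by
  have hP : IsOpen (U ×ˢ Ioo 0 T) := hU.prod isOpen_Ioo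
  have hv2 := hv.contDiffOn_two
  have hvt : ContDiffOn ℝ 1 (Function.uncurry (cvt v)) (U ×ˢ Ioo 0 T) :=
    hv2.uncurry_cvt hP (by norm_num)
  have hvdiff : ∀ x ∈ U, ∀ s ∈ Ioo 0 T, DifferentiableAt ℝ (Function.uncurry (cvt v)) (x, s) :=
    fun x hx s hs => hvt.differentiableOn_one.differentiableAt (hP.mem_nhds ⟨hx, hs⟩)
  have hDv := (hv2.uncurry_cDv hP (k := 0) (by norm_num)).continuousOn
  have hDvt : ContinuousOn (Function.uncurry (cDvt v)) (U ×ˢ Ioo 0 T) :=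
    (hvt.uncurry_cDv hP (k := 0) (by norm_num)).continuousOn
  have hgψ : ContDiff ℝ 1 (gradient ψ) := hψ.gradient (by norm_num)
  have hgF : ContDiff ℝ 1 (gradient F) := hF.gradient (by norm_num)
  have hu0 : ∀ x ∈ U \ tsupport u, u x = 0 := fun x hx => image_eq_zero_of_notMem_tsupport hx.2
  have hDu0 : ∀ x ∈ U \ tsupport u, gradMat u x = 0 := fun x hx =>
    gradMat_of_notMem_tsupport hx.2
  have hderivψ : HasDerivAt (fun s => ∫ x in U, ⟪gradient ψ (cvt v x s), u x⟫)
      (∫ x in U, ⟪fderiv ℝ (gradient ψ) (cvt v x t) (cvt (cvt v) x t), u x⟫) t := by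
    refine hasDerivAt_setIntegral_of_continuousOn
      (f := fun x s => ⟪gradient ψ (cvt v x s), u x⟫)
      (f' := fun x s => ⟪fderiv ℝ (gradient ψ) (cvt v x s) (cvt (cvt v) x s), u x⟫)
      hU.measurableSet hc hsupp isOpen_Ioo ht ?_ ?_ (fun x hx s hs => ?_)
      fun x hx s _ => by simp [hu0 x hx]
    · exact (hgψ.continuous.comp_continuousOn hvt.continuousOn).inner
        (hu.continuous.comp continuous_fst).continuousOn
    · exact (((hgψ.continuous_fderiv one_ne_zero).comp_continuousOn hvt.continuousOn).clm_apply
        (hvt.uncurry_cvt hP (k := 0) (by norm_num)).continuousOn).inner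
        (hu.continuous.comp continuous_fst).continuousOn
    · exact ((hgψ.differentiable one_ne_zero _).hasFDerivAt.comp_hasDerivAt s
        (hasDerivAt_cvt (hvdiff x hx s hs))).inner ℝ (hasDerivAt_const s (u x)) |>.congr_deriv
        (by simp)
  have hderivF : HasDerivAt (fun s => ∫ x in U, ⟪gradient F (cDv v x s), gradMat u x⟫)
      (∫ x in U, hessBil F (cDv v x t) (cDvt v x t) (gradMat u x)) t := by
    refine hasDerivAt_setIntegral_of_continuousOn
      (f := fun x s => ⟪gradient F (cDv v x s), gradMat u x⟫)
      (f' := fun x s => hessBil F (cDv v x s) (cDvt v x s) (gradMat u x))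
      hU.measurableSet hc hsupp isOpen_Ioo ht ?_ ?_ (fun x hx s hs => ?_)
      fun x hx s _ => by simp [hDu0 x hx]
    · exact (hgF.continuous.comp_continuousOn hDv).inner
        ((continuous_gradMat hu).comp continuous_fst).continuousOn
    · exact (((hgF.continuous_fderiv one_ne_zero).comp_continuousOn hDv).clm_apply hDvt).inner
        ((continuous_gradMat hu).comp continuous_fst).continuousOn
    · exact ((hgF.differentiable one_ne_zero _).hasFDerivAt.comp_hasDerivAt s
        (hasDerivAt_cDv hv2 hP ⟨hx, hs⟩)).inner ℝ (hasDerivAt_const s (gradMat u x))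
        |>.congr_deriv (by simp [hessBil])
  have hzero : HasDerivAt (fun s => (∫ x in U, ⟪gradient ψ (cvt v x s), u x⟫) +
      ∫ x in U, ⟪gradient F (cDv v x s), gradMat u x⟫) 0 t :=
    (hasDerivAt_const t 0).congr_of_eventuallyEq <| Filter.eventually_of_mem
      (isOpen_Ioo.mem_nhds ht) fun s hs =>
        hv.integral_inner_add_integral_inner_eq_zero hU hF hs hu hc hsupp
  exact eq_neg_of_add_eq_zero_left ((hderivψ.add hderivF).unique hzero)

theorem integrableOn_legendre_mul_tDeriv (hU : MeasurableSet U) (hψ : ContDiff ℝ 1 ψ)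
    (hmono : ∀ y z, 0 ≤ ⟪gradient ψ y - gradient ψ z, y - z⟫)
    (hvt : ContinuousOn (Function.uncurry (cvt v)) (U ×ˢ J)) (hφ : ContDiff ℝ 1 φ)
    (hφc : HasCompactSupport φ) (hφU : tsupport φ ⊆ U ×ˢ J) (ht : t ∈ J) :
    IntegrableOn (fun x => legendre ψ (gradient ψ (cvt v x t)) * tDeriv φ x t) U :=
  (((continuous_legendre_gradient hψ hmono).comp_continuousOn hvt).mul
    (continuous_tDeriv hφ).continuousOn).integrableOn_slice hU hφc hφU
    (fun p hp => mul_eq_zero_of_right _ (tDeriv_of_notMem_tsupport (x := p.1) (t := p.2) hp)) ht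

theorem integrableOn_hessBil_tens (hU : MeasurableSet U) (hF : ContDiff ℝ 2 F)
    {M Ξ : Sp n → ℝ → Mat m n} (hM : ContinuousOn (Function.uncurry M) (U ×ˢ J))
    (hΞ : ContinuousOn (Function.uncurry Ξ) (U ×ˢ J))
    (hvt : ContinuousOn (Function.uncurry (cvt v)) (U ×ˢ J)) (hφ : ContDiff ℝ 1 φ)
    (hφc : HasCompactSupport φ) (hφU : tsupport φ ⊆ U ×ˢ J) (ht : t ∈ J) :
    IntegrableOn (fun x => hessBil F (M x t) (Ξ x t) (tens (cvt v x t) (spGrad φ x t))) U :=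
  ContinuousOn.integrableOn_slice
    (g := fun p => hessBil F (M p.1 p.2) (Ξ p.1 p.2) (tens (cvt v p.1 p.2) (spGrad φ p.1 p.2)))
    ((((hF.gradient (k := 1) (by norm_num)).continuous_fderiv one_ne_zero).comp_continuousOn
      hM).clm_apply hΞ |>.inner (continuous_tens.comp_continuousOn
        (hvt.prodMk (continuous_spGrad hφ).continuousOn))) hU hφc hφU
    (fun p hp => by simp [hessBil, spGrad_of_notMem_tsupport hp, tens_zero_right]) ht

theorem hasDerivAt_integral_mul_legendre (hU : IsOpen U) (hJ : IsOpen J)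
    (hψ : ContDiff ℝ 2 ψ) (hmono : ∀ y z, 0 ≤ ⟪gradient ψ y - gradient ψ z, y - z⟫)
    (hv : ContDiffOn ℝ 2 (Function.uncurry v) (U ×ˢ J)) (hφ : ContDiff ℝ 1 φ)
    (hφc : HasCompactSupport φ) (hφU : tsupport φ ⊆ U ×ˢ J) (ht : t ∈ J) :
    HasDerivAt (fun s => ∫ x in U, φ (x, s) * legendre ψ (gradient ψ (cvt v x s)))
      ((∫ x in U, legendre ψ (gradient ψ (cvt v x t)) * tDeriv φ x t) +
        ∫ x in U, φ (x, t) *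
          ⟪fderiv ℝ (gradient ψ) (cvt v x t) (cvt (cvt v) x t), cvt v x t⟫) t := by
  have hP := hU.prod hJ
  have hvt : ContDiffOn ℝ 1 (Function.uncurry (cvt v)) (U ×ˢ J) := hv.uncurry_cvt hP (by norm_num)
  have hgψ : ContDiff ℝ 1 (gradient ψ) := hψ.gradient (by norm_num)
  have hd : ContinuousOn (fun p : Sp n × ℝ => φ p *
      ⟪fderiv ℝ (gradient ψ) (cvt v p.1 p.2) (cvt (cvt v) p.1 p.2), cvt v p.1 p.2⟫) (U ×ˢ J) :=
    hφ.continuous.continuousOn.mul <|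
      (((hgψ.continuous_fderiv one_ne_zero).comp_continuousOn hvt.continuousOn).clm_apply
        (hvt.uncurry_cvt hP (k := 0) (by norm_num)).continuousOn).inner hvt.continuousOn
  have hlegendre := continuous_legendre_gradient (hψ.of_le one_le_two) hmono
  rw [← integral_add (integrableOn_legendre_mul_tDeriv hU.measurableSet (hψ.of_le one_le_two)
    hmono hvt.continuousOn hφ hφc hφU ht) (hd.integrableOn_slice hU.measurableSet hφc hφU
      (fun p hp => mul_eq_zero_of_left (image_eq_zero_of_notMem_tsupport hp) _) ht)]
  refine hasDerivAt_setIntegral_of_continuousOn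
    (f := fun x s => φ (x, s) * legendre ψ (gradient ψ (cvt v x s)))
    (f' := fun x s => legendre ψ (gradient ψ (cvt v x s)) * tDeriv φ x s + φ (x, s) *
      ⟪fderiv ℝ (gradient ψ) (cvt v x s) (cvt (cvt v) x s), cvt v x s⟫)
    hU.measurableSet (hφc.image continuous_fst) (image_subset_iff.2 fun _ hp => (hφU hp).1)
    hJ ht ?_ ?_ (fun x hx s hs => ?_) fun x hx s _ => ?_
  · exact hφ.continuous.continuousOn.mul (hlegendre.comp_continuousOn hvt.continuousOn)
  · exact ((hlegendre.comp_continuousOn hvt.continuousOn).mul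
      (continuous_tDeriv hφ).continuousOn).add hd
  · have hvtdiff : DifferentiableAt ℝ (Function.uncurry (cvt v)) (x, s) :=
      hvt.differentiableOn_one.differentiableAt (hP.mem_nhds ⟨hx, hs⟩)
    refine ((hasDerivAt_slice (hφ.differentiable one_ne_zero (x, s))).mul
      ((hasDerivAt_cvt hvtdiff).legendre_gradient (hψ.differentiable two_ne_zero) hmono
        (hgψ.differentiable one_ne_zero _))).congr_deriv ?_
    simp only [tDeriv]
    ring
  · rw [image_eq_zero_of_notMem_tsupport fun h => hx.2 ⟨_, h, rfl⟩, zero_mul]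

theorem IsClassicalSolution.integral_mul_inner_fderiv_gradient_eq
    (hv : IsClassicalSolution ψ F U T v) (hU : IsOpen U) (hψ : ContDiff ℝ 2 ψ)
    (hF : ContDiff ℝ 2 F) (hφ : ContDiff ℝ 1 φ) (hφc : HasCompactSupport φ)
    (hφU : tsupport φ ⊆ U ×ˢ Ioo 0 T) (ht : t ∈ Ioo 0 T) :
    ∫ x in U, φ (x, t) * ⟪fderiv ℝ (gradient ψ) (cvt v x t) (cvt (cvt v) x t), cvt v x t⟫ =
      -((∫ x in U, φ (x, t) * hessBil F (cDv v x t) (cDvt v x t) (cDvt v x t)) +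
        ∫ x in U, hessBil F (cDv v x t) (cDvt v x t) (tens (cvt v x t) (spGrad φ x t))) := by
  have hP := hU.prod (isOpen_Ioo (a := 0) (b := T))
  have hv2 := hv.contDiffOn_two
  have hvt : ContDiffOn ℝ 1 (Function.uncurry (cvt v)) (U ×ˢ Ioo 0 T) :=
    hv2.uncurry_cvt hP (by norm_num)
  have hDv := (hv2.uncurry_cDv hP (k := 0) (by norm_num)).continuousOn
  have hDvt : ContinuousOn (Function.uncurry (cDvt v)) (U ×ˢ Ioo 0 T) :=
    (hvt.uncurry_cDv hP (k := 0) (by norm_num)).continuousOn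
  set u : Sp n → Tg m := fun y => φ (y, t) • cvt v y t
  have hu_supp : tsupport u ⊆ Prod.fst '' tsupport φ :=
    (tsupport_smul_subset_left _ _).trans (tsupport_slice_subset φ t)
  have hsupp : tsupport u ⊆ U := hu_supp.trans (image_subset_iff.2 fun _ hp => (hφU hp).1)
  have hu : ContDiff ℝ 1 u :=
    ((hφ.comp (contDiff_id.prodMk contDiff_const)).contDiffOn.smul
      (hvt.uncurry_right t ht)).contDiff_of_tsupport_subset hU hsupp
  have hc : HasCompactSupport u :=
    (hφc.image continuous_fst).of_isClosed_subset (isClosed_tsupport _) hu_supp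
  have hgrad : ∀ x ∈ U, hessBil F (cDv v x t) (cDvt v x t) (gradMat u x) =
      φ (x, t) * hessBil F (cDv v x t) (cDvt v x t) (cDvt v x t) +
        hessBil F (cDv v x t) (cDvt v x t) (tens (cvt v x t) (spGrad φ x t)) := fun x hx => by
    rw [gradMat_smul (f := fun y => φ (y, t)) (hφ.differentiable one_ne_zero _ |>.comp x
        (differentiableAt_id.prodMk (differentiableAt_const t)))
      ((hvt.uncurry_right t ht).differentiableOn_one.differentiableAt (hU.mem_nhds hx)),
      ← spGrad_eq_gradient (hφ.differentiable one_ne_zero _)]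
    simp only [hessBil, inner_add_right, inner_smul_right]
    rfl
  have hIb : IntegrableOn
      (fun x => φ (x, t) * hessBil F (cDv v x t) (cDvt v x t) (cDvt v x t)) U :=
    ContinuousOn.integrableOn_slice
      (g := fun p => φ p * hessBil F (cDv v p.1 p.2) (cDvt v p.1 p.2) (cDvt v p.1 p.2))
      (hφ.continuous.continuousOn.mul <|
        ((((hF.gradient (k := 1) (by norm_num)).continuous_fderiv one_ne_zero).comp_continuousOn
          hDv).clm_apply hDvt).inner hDvt)
      hU.measurableSet hφc hφU (fun p hp => mul_eq_zero_of_left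
        (image_eq_zero_of_notMem_tsupport hp) _) ht
  rw [← integral_add hIb (integrableOn_hessBil_tens hU.measurableSet hF hDv hDvt hvt.continuousOn
    hφ hφc hφU ht), ← setIntegral_congr_fun hU.measurableSet hgrad,
    ← hv.integral_inner_fderiv_gradient_eq hU hψ hF ht hu hc hsupp]
  simp only [u, inner_smul_right]

end ClassicalSolution

theorem statement1_general
    (n m : ℕ)
    (ψ : Tg m → ℝ) (F : Mat m n → ℝ) (hψ : ContDiff ℝ 2 ψ) (hF : ContDiff ℝ 2 F)
    (θ Θ : ℝ) (hθ : 0 < θ)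
    (hUCψ : UnifConv θ Θ ψ)
    (U : Set (Sp n)) (T : ℝ) (hU : IsBddDomain U)
    (v : Sp n → ℝ → Tg m) (hv : IsClassicalSolution ψ F U T v)
    (φ : Sp n × ℝ → ℝ) (hφ : IsSTTest U T φ) :
    ∀ t ∈ Set.Ioo (0 : ℝ) T,
      HasDerivAt (fun s => ∫ x in U, φ (x, s) * legendre ψ (gradient ψ (cvt v x s)))
        ((∫ x in U, (legendre ψ (gradient ψ (cvt v x t)) * tDeriv φ x t -
            hessBil F (cDv v x t) (cDvt v x t) (tens (cvt v x t) (spGrad φ x t)))) -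
          ∫ x in U, φ (x, t) * hessBil F (cDv v x t) (cDvt v x t) (cDvt v x t)) t := by
  intro t ht
  have hmono : ∀ y z, 0 ≤ ⟪gradient ψ y - gradient ψ z, y - z⟫ := fun y z =>
    (mul_nonneg hθ.le (sq_nonneg _)).trans (hUCψ y z).1
  have hφ1 : ContDiff ℝ 1 φ := hφ.smooth.of_le (WithTop.coe_le_coe.2 le_top)
  have hP := hU.1.prod (isOpen_Ioo (a := 0) (b := T))
  have hvt := hv.contDiffOn_two.uncurry_cvt hP (k := 1) (by norm_num)
  rw [integral_sub (integrableOn_legendre_mul_tDeriv hU.1.measurableSet (hψ.of_le one_le_two)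
      hmono hvt.continuousOn hφ1 hφ.cpt hφ.supp ht)
    (integrableOn_hessBil_tens (Ξ := cDvt v) hU.1.measurableSet hF
      (hv.contDiffOn_two.uncurry_cDv hP (k := 0) (by norm_num)).continuousOn
      (hvt.uncurry_cDv hP (k := 0) (by norm_num)).continuousOn hvt.continuousOn hφ1 hφ.cpt
      hφ.supp ht)]
  refine (hasDerivAt_integral_mul_legendre hU.1 isOpen_Ioo hψ hmono hv.contDiffOn_two hφ1
    hφ.cpt hφ.supp ht).congr_deriv ?_
  rw [hv.integral_mul_inner_fderiv_gradient_eq hU.1 hψ hF hφ1 hφ.cpt hφ.supp ht]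
  ring

/-- the second integral identity for classical solutions. -/
theorem statement1
    (n m : ℕ) (hn : 0 < n) (hm : 0 < m)
    (ψ : Tg m → ℝ) (F : Mat m n → ℝ) (hψ : ContDiff ℝ 2 ψ) (hF : ContDiff ℝ 2 F)
    (θ Θ lam Lam : ℝ) (hθ : 0 < θ) (hΘ : 0 < Θ) (hlam : 0 < lam) (hLam : 0 < Lam)
    (hUCψ : UnifConv θ Θ ψ) (hUCF : UnifConv lam Lam F)
    (U : Set (Sp n)) (T : ℝ) (hU : IsBddDomain U) (hT : 0 < T)
    (v : Sp n → ℝ → Tg m) (hv : IsClassicalSolution ψ F U T v)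
    (φ : Sp n × ℝ → ℝ) (hφ : IsSTTest U T φ) :
    ∀ t ∈ Set.Ioo (0 : ℝ) T,
      HasDerivAt (fun s => ∫ x in U, φ (x, s) * legendre ψ (gradient ψ (cvt v x s)))
        ((∫ x in U, (legendre ψ (gradient ψ (cvt v x t)) * tDeriv φ x t -
            hessBil F (cDv v x t) (cDvt v x t) (tens (cvt v x t) (spGrad φ x t)))) -
          ∫ x in U, φ (x, t) * hessBil F (cDv v x t) (cDvt v x t) (cDvt v x t)) t :=
  statement1_general n m ψ F hψ hF θ Θ hθ hUCψ U T hU v hv φ hφ
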